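/- The Laguerre polynomials defined by L₀(x) = 1, L₁(x) = 1 − x, and (i+1) L_{i+1}(x) = (2i+1−x) L_i(x) − i L_{i−1}(x) are orthogonal with respect to the exponential density e^{−x} on (0,∞): for m ≠ n, ∫₀^∞ L_m(x) L_n(x) e^{−x} dx = 0. -/

import Mathlib

open Polynomial MeasureTheory

/-- The Laguerre polynomials: `L₀(x) = 1`, `L₁(x) = 1 − x`, and
`(i+1) L_{i+1}(x) = (2i+1−x) L_i(x) − i L_{i−1}(x)`. -/
noncomputable def laguerre : ℕ → Polynomial ℝ
  | 0 => 1
  | 1 => 1 - X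
  | (n + 2) =>
      C (((n : ℝ) + 2)⁻¹) *
        ((C (2 * (n : ℝ) + 3) - X) * laguerre (n + 1) - C ((n : ℝ) + 1) * laguerre n)

/-!
The functional `Φ(p) = ∫₀^∞ p(x) e^{-x} dx` sends `xʲ` to `j!`, and the three-term recurrence
then gives `Φ(xʲ Lₙ) = (-1)ⁿ j! (j choose n)`, which vanishes for `j < n`. Since `deg Lₘ ≤ m`,
`Lₘ` is a combination of the `xʲ` with `j < n` whenever `m < n`, so `Φ(Lₘ Lₙ) = 0`.
-/

open scoped Nat

namespace Nat

theorem add_one_mul_choose_succ_add_mul_choose (j n : ℕ) :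
    (n + 1) * j.choose (n + 1) + n * j.choose n = j * j.choose n := by
  rcases le_or_gt n j with hnj | hjn
  · have h := choose_succ_right_eq j n
    calc (n + 1) * j.choose (n + 1) + n * j.choose n
        = j.choose n * (j - n + n) := by rw [mul_comm, h]; ring
      _ = j * j.choose n := by rw [Nat.sub_add_cancel hnj, mul_comm]
  · simp [choose_eq_zero_of_lt hjn, choose_eq_zero_of_lt (hjn.trans (lt_add_one n))]

/-- The binomial identity behind the Laguerre recurrence, with every term moved to the side
where it is nonnegative. -/
theorem choose_laguerre_recurrence (j n : ℕ) :
    (n + 2) * j.choose (n + 2) + (2 * n + 3) * j.choose (n + 1) + (n + 1) * j.choose n =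
      (j + 1) * (j + 1).choose (n + 1) := by
  have h₀ := add_one_mul_choose_succ_add_mul_choose j n
  have h₁ := add_one_mul_choose_succ_add_mul_choose j (n + 1)
  rw [choose_succ_succ]
  linear_combination h₁ + h₀

end Nat

theorem integrableOn_pow_mul_exp_neg (k : ℕ) :
    IntegrableOn (fun x : ℝ => x ^ k * Real.exp (-x)) (Set.Ioi 0) := by
  refine (Real.GammaIntegral_convergent (s := (k : ℝ) + 1) (by positivity)).congr_fun
    (fun x _ => ?_) measurableSet_Ioi
  beta_reduce
  rw [add_sub_cancel_right, Real.rpow_natCast, mul_comm]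

theorem integral_pow_mul_exp_neg (k : ℕ) :
    ∫ x in Set.Ioi (0 : ℝ), x ^ k * Real.exp (-x) = k ! := by
  rw [← Real.Gamma_nat_eq_factorial, Real.Gamma_eq_integral (by positivity)]
  refine setIntegral_congr_fun measurableSet_Ioi fun x _ => ?_
  rw [add_sub_cancel_right, Real.rpow_natCast, mul_comm]

theorem integrableOn_eval_mul_exp_neg (p : ℝ[X]) :
    IntegrableOn (fun x : ℝ => p.eval x * Real.exp (-x)) (Set.Ioi 0) := by
  simp_rw [eval_eq_sum_range, Finset.sum_mul, mul_assoc]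
  exact integrable_finsetSum _ fun k _ => (integrableOn_pow_mul_exp_neg k).const_mul _

noncomputable def expMoment : ℝ[X] →ₗ[ℝ] ℝ where
  toFun p := ∫ x in Set.Ioi (0 : ℝ), p.eval x * Real.exp (-x)
  map_add' p q := by
    simp only [eval_add, add_mul]
    exact integral_add (integrableOn_eval_mul_exp_neg p) (integrableOn_eval_mul_exp_neg q)
  map_smul' a p := by
    simp only [eval_smul, smul_eq_mul, mul_assoc, RingHom.id_apply]
    exact integral_const_mul a _

theorem expMoment_apply (p : ℝ[X]) :
    expMoment p = ∫ x in Set.Ioi (0 : ℝ), p.eval x * Real.exp (-x) := rfl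

theorem expMoment_C_mul (a : ℝ) (p : ℝ[X]) : expMoment (C a * p) = a * expMoment p := by
  rw [C_mul', map_smul, smul_eq_mul]

theorem expMoment_X_pow (k : ℕ) : expMoment (X ^ k) = k ! := by
  simpa [expMoment_apply] using integral_pow_mul_exp_neg k

theorem expMoment_X_pow_mul_laguerre :
    ∀ n j : ℕ, expMoment (X ^ j * laguerre n) = (-1) ^ n * j ! * j.choose n
  | 0, j => by simp [laguerre, expMoment_X_pow]
  | 1, j => by
    rw [laguerre, mul_sub, mul_one, ← pow_succ, map_sub, expMoment_X_pow, expMoment_X_pow,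
      Nat.factorial_succ, Nat.choose_one_right]
    push_cast
    ring
  | n + 2, j => by
    have hrec : X ^ j * laguerre (n + 2) = C ((n + 2 : ℝ)⁻¹) * (C (2 * n + 3 : ℝ) *
        (X ^ j * laguerre (n + 1)) - X ^ (j + 1) * laguerre (n + 1) - C (n + 1 : ℝ) *
        (X ^ j * laguerre n)) := by
      rw [laguerre]; ring
    have hchoose : ((n + 2) * j.choose (n + 2) + (2 * n + 3) * j.choose (n + 1) +
        (n + 1) * j.choose n : ℝ) = (j + 1) * (j + 1).choose (n + 1) := by
      exact_mod_cast Nat.choose_laguerre_recurrence j n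
    rw [hrec, expMoment_C_mul, map_sub, map_sub, expMoment_C_mul, expMoment_C_mul,
      expMoment_X_pow_mul_laguerre (n + 1) j, expMoment_X_pow_mul_laguerre (n + 1) (j + 1),
      expMoment_X_pow_mul_laguerre n j, Nat.factorial_succ]
    rw [inv_mul_eq_iff_eq_mul₀ (by positivity)]
    push_cast
    linear_combination -(-1) ^ n * (j ! : ℝ) * hchoose

theorem natDegree_laguerre_le : ∀ n : ℕ, (laguerre n).natDegree ≤ n
  | 0 => by simp [laguerre]
  | 1 => by rw [laguerre]; compute_degree
  | n + 2 => by
    rw [laguerre]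
    refine (natDegree_C_mul_le _ _).trans ((natDegree_sub_le _ _).trans (max_le ?_ ?_))
    · refine (natDegree_mul_le_of_le (m := 1) ?_ (natDegree_laguerre_le (n + 1))).trans_eq ?_
      · compute_degree
      · ring
    · exact (natDegree_C_mul_le _ _).trans ((natDegree_laguerre_le n).trans (by omega))

theorem expMoment_mul_laguerre_of_natDegree_lt {p : ℝ[X]} {n : ℕ} (hp : p.natDegree < n) :
    expMoment (p * laguerre n) = 0 := by
  rw [p.as_sum_range_C_mul_X_pow' hp, Finset.sum_mul, map_sum]
  refine Finset.sum_eq_zero fun k hk => ?_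
  rw [mul_assoc, expMoment_C_mul, expMoment_X_pow_mul_laguerre,
    Nat.choose_eq_zero_of_lt (Finset.mem_range.mp hk), Nat.cast_zero, mul_zero, mul_zero]

/-- The Laguerre polynomials are orthogonal with respect to the exponential
density `e^{−x}` on `(0,∞)`: for `m ≠ n`,
`∫₀^∞ L_m(x) L_n(x) e^{−x} dx = 0`. -/
theorem laguerre_orthogonal {m n : ℕ} (hmn : m ≠ n) :
    ∫ x in Set.Ioi (0 : ℝ),
      (laguerre m).eval x * (laguerre n).eval x * Real.exp (-x) = 0 := by
  wlog hlt : m < n generalizing m n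
  · simpa only [mul_comm ((laguerre m).eval _)] using this hmn.symm (by omega)
  have := expMoment_mul_laguerre_of_natDegree_lt ((natDegree_laguerre_le m).trans_lt hlt)
  simpa only [expMoment_apply, eval_mul] using this
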